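/- Let f be a Boolean monomial system whose dependency graph is strongly connected with loop number t ≥ 1. Then (0, …, 0) and (1, …, 1) are fixed points of f, and for every divisor d of t, f has a limit cycle of length exactly d: there exists a ∈ 𝔽₂ⁿ with f^d(a) = a and f^e(a) ≠ a for all 0 < e < d. -/
import Mathlib


/-- `hasWalk E m a b` means there is a walk of length `m` from `a` to `b`
in the directed graph with edge relation `E` (walks of length 0 allowed). -/
def hasWalk {V : Type*} (E : V → V → Prop) : ℕ → V → V → Prop
  | 0 => fun a b => a = b
  | m + 1 => fun a b => ∃ c, E a c ∧ hasWalk E m c b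

/-- A directed graph is strongly connected if there is a walk between any
two vertices. -/
def StronglyConnected {V : Type*} (E : V → V → Prop) : Prop :=
  ∀ a b : V, ∃ m, hasWalk E m a b

/-- The loop number at a vertex `a`: the minimum `t ≥ 1` arising as the
difference of lengths of two closed walks at `a`, and `0` if there is no
closed walk of length `≥ 1` at `a` (so no such difference exists). -/
noncomputable def loopNumAt {V : Type*} (E : V → V → Prop) (a : V) : ℕ :=
  sInf {t | 1 ≤ t ∧ ∃ p q, hasWalk E p a a ∧ hasWalk E q a a ∧ p = q + t}

/-- Evaluation of a monomial coordinate function: `none` is the constant 0,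
`some S` is the square-free monomial `∏ j ∈ S, x j` (empty product = 1). -/
def monEval {ι : Type*} (c : Option (Finset ι)) (x : ι → ZMod 2) : ZMod 2 :=
  match c with
  | none => 0
  | some S => ∏ j ∈ S, x j

/-- The Boolean monomial system determined by the coordinate data `M`. -/
def sysEval {ι : Type*} (M : ι → Option (Finset ι)) (x : ι → ZMod 2) : ι → ZMod 2 :=
  fun i => monEval (M i) x

/-- Edge relation of the dependency graph of a Boolean monomial system:
`i → j` iff `f i ≠ 0` and `x j` is a factor of `f i`. -/
def depEdge {ι : Type*} (M : ι → Option (Finset ι)) (i j : ι) : Prop :=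
  ∃ S, M i = some S ∧ j ∈ S

/-- A map is a fixed point system if every trajectory reaches a fixed point. -/
def FixedPointSystem {α : Type*} (F : α → α) : Prop :=
  ∀ a, ∃ m, F^[m + 1] a = F^[m] a

/-- A glueing of the Boolean monomial system `M₂` (in variables `y`) to the
Boolean monomial system `M₁` (in variables `x`): the `x`-coordinates are
those of `M₁`, and the `i`-th `y`-coordinate is `g i` multiplied by the
monomial in the `x`-variables given by `T i` (and is `0` when `g i = 0`). -/
def glue {r s : ℕ} (M₁ : Fin r → Option (Finset (Fin r)))
    (M₂ : Fin s → Option (Finset (Fin s))) (T : Fin s → Finset (Fin r)) :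
    (Fin r ⊕ Fin s) → Option (Finset (Fin r ⊕ Fin s))
  | .inl i => (M₁ i).map (Finset.image Sum.inl)
  | .inr i => (M₂ i).map (fun S => S.image Sum.inr ∪ (T i).image Sum.inl)


lemma hasWalk_trans {V : Type*} {E : V → V → Prop} :
    ∀ {p : ℕ} {q : ℕ} {a b c : V}, hasWalk E p a b → hasWalk E q b c →
      hasWalk E (p + q) a c := by
  intro p
  induction p with
  | zero => intro q a b c h1 h2; cases h1; simpa using h2
  | succ p ih =>
    intro q a b c h1 h2
    obtain ⟨x, hx, hw⟩ := h1
    rw [Nat.succ_add]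
    exact ⟨x, hx, ih hw h2⟩

lemma hasWalk_mul {V : Type*} {E : V → V → Prop} {p : ℕ} {a : V}
    (h : hasWalk E p a a) : ∀ k, hasWalk E (k * p) a a := by
  intro k
  induction k with
  | zero => simp [hasWalk]
  | succ k ih => rw [Nat.succ_mul]; exact hasWalk_trans ih h

/-- If the dependency graph of a Boolean monomial system is
strongly connected with loop number `t ≥ 1`, then `(0,…,0)` and `(1,…,1)`
are fixed points of `f`, and for every divisor `d` of `t`, `f` has a limit
cycle of length exactly `d`. -/
theorem statement10 {n : ℕ} (hn : 1 ≤ n) (M : Fin n → Option (Finset (Fin n)))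
    (hsc : StronglyConnected (depEdge M)) (t : ℕ) (ht : 1 ≤ t)
    (hloop : ∀ a, loopNumAt (depEdge M) a = t) :
    sysEval M (fun _ => 0) = (fun _ => 0) ∧
      sysEval M (fun _ => 1) = (fun _ => 1) ∧
      ∀ d : ℕ, d ∣ t → ∃ a : Fin n → ZMod 2,
        (sysEval M)^[d] a = a ∧ ∀ e : ℕ, 0 < e → e < d → (sysEval M)^[e] a ≠ a := by
  set E := depEdge M with hE
  have hmem : ∀ a : Fin n,
      1 ≤ t ∧ ∃ p q, hasWalk E p a a ∧ hasWalk E q a a ∧ p = q + t := by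
    intro a
    have h := hloop a
    by_cases hne : {t' | 1 ≤ t' ∧ ∃ p q, hasWalk E p a a ∧ hasWalk E q a a ∧
        p = q + t'}.Nonempty
    · have := Nat.sInf_mem hne
      rw [← loopNumAt, h] at this
      exact this
    · rw [Set.not_nonempty_iff_eq_empty] at hne
      rw [loopNumAt, hne, Nat.sInf_empty] at h
      omega
  have hout : ∀ i : Fin n, ∃ S, M i = some S ∧ S.Nonempty := by
    intro i
    obtain ⟨-, p, q, hp, -, hpq⟩ := hmem i
    obtain ⟨m, rfl⟩ : ∃ m, p = m + 1 := ⟨p - 1, by omega⟩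
    obtain ⟨c, hc, -⟩ := hp
    obtain ⟨S, hS, hcS⟩ := hc
    exact ⟨S, hS, c, hcS⟩
  refine ⟨?_, ?_, ?_⟩
  · funext i
    obtain ⟨S, hS, hSne⟩ := hout i
    show monEval (M i) (fun _ => 0) = 0
    rw [hS]
    show (∏ _j ∈ S, (0 : ZMod 2)) = 0
    rw [Finset.prod_const, zero_pow (Finset.card_ne_zero.mpr hSne)]
  · funext i
    obtain ⟨S, hS, -⟩ := hout i
    show monEval (M i) (fun _ => 1) = 1
    rw [hS]
    show (∏ _j ∈ S, (1 : ZMod 2)) = 1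
    rw [Finset.prod_const, one_pow]
  · intro d hd
    have hd1 : 1 ≤ d := Nat.pos_of_dvd_of_pos hd ht
    set v₀ : Fin n := ⟨0, hn⟩ with hv₀
    have hdvd : ∀ m, hasWalk E m v₀ v₀ → t ∣ m := by
      intro m hm
      obtain ⟨-, p, q, hp, hq, hpq⟩ := hmem v₀
      by_contra hnd
      set r := m % t with hr
      have hr1 : 1 ≤ r := by
        rcases Nat.eq_zero_or_pos r with h0 | h1
        · exact absurd (Nat.dvd_of_mod_eq_zero h0) hnd
        · exact h1
      have hrt : r < t := Nat.mod_lt _ (by omega)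
      set k := m / t with hk
      have hw1 : hasWalk E (k * q + m) v₀ v₀ := hasWalk_trans (hasWalk_mul hq k) hm
      have hw2 : hasWalk E (k * p) v₀ v₀ := hasWalk_mul hp k
      have hkp : k * p = k * q + k * t := by rw [hpq]; ring
      have hmeq : t * k + r = m := Nat.div_add_mod m t
      have hcm : k * t = t * k := Nat.mul_comm k t
      have hrm : r ∈ {t' | 1 ≤ t' ∧ ∃ p q, hasWalk E p v₀ v₀ ∧ hasWalk E q v₀ v₀ ∧
          p = q + t'} := ⟨hr1, k * q + m, k * p, hw1, hw2, by omega⟩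
      have := Nat.sInf_le hrm
      rw [← loopNumAt, hloop v₀] at this
      omega
    choose φ hφ using fun i => hsc v₀ i
    have hedge : ∀ i j : Fin n, E i j → (φ j) % t = (φ i + 1) % t := by
      intro i j hij
      have hw : hasWalk E (φ i + 1) v₀ j :=
        hasWalk_trans (hφ i) ⟨j, hij, rfl⟩
      obtain ⟨r, hrw⟩ := hsc j v₀
      obtain ⟨c1, hc1⟩ := hdvd _ (hasWalk_trans (hφ j) hrw)
      obtain ⟨c2, hc2⟩ := hdvd _ (hasWalk_trans hw hrw)
      have e1 : (φ j + r) % t = ((φ i + 1) + r) % t := by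
        rw [hc1, hc2, Nat.mul_mod_right, Nat.mul_mod_right]
      exact Nat.ModEq.add_right_cancel' r e1
    set a : Fin n → ZMod 2 := fun i => if d ∣ φ i then 1 else 0 with ha
    have hiter : ∀ m (i : Fin n),
        ((sysEval M)^[m] a) i = if d ∣ (φ i + m) then 1 else 0 := by
      intro m
      induction m with
      | zero => intro i; simp [ha]
      | succ m ih =>
        intro i
        rw [Function.iterate_succ_apply']
        obtain ⟨S, hS, hSne⟩ := hout i
        have hconst : ∀ j ∈ S, ((sysEval M)^[m] a) j =
            if d ∣ (φ i + (m + 1)) then 1 else 0 := by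
          intro j hj
          rw [ih j]
          have hmod : φ j % t = (φ i + 1) % t := hedge i j ⟨S, hS, hj⟩
          have hmd : φ j % d = (φ i + 1) % d := Nat.ModEq.of_dvd hd hmod
          have hh : (φ j + m) % d = (φ i + (m + 1)) % d := by
            have h2 := Nat.ModEq.add_right m hmd
            calc (φ j + m) % d = ((φ i + 1) + m) % d := h2
              _ = (φ i + (m + 1)) % d := by congr 1; omega
          by_cases hcase : d ∣ φ i + (m + 1)
          · rw [if_pos hcase, if_pos]
            rw [Nat.dvd_iff_mod_eq_zero] at hcase ⊢
            omega
          · rw [if_neg hcase, if_neg]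
            rw [Nat.dvd_iff_mod_eq_zero] at hcase ⊢
            omega
        show monEval (M i) ((sysEval M)^[m] a) = _
        rw [hS]
        show (∏ j ∈ S, ((sysEval M)^[m] a) j) = _
        rw [Finset.prod_congr rfl hconst, Finset.prod_const]
        by_cases hcase : d ∣ φ i + (m + 1)
        · rw [if_pos hcase, one_pow]
        · rw [if_neg hcase, zero_pow (Finset.card_ne_zero.mpr hSne)]
    refine ⟨a, ?_, ?_⟩
    · funext i
      rw [hiter d i]
      show (if d ∣ φ i + d then (1 : ZMod 2) else 0) = if d ∣ φ i then 1 else 0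
      by_cases hc : d ∣ φ i
      · rw [if_pos (Nat.dvd_add_self_right.mpr hc), if_pos hc]
      · rw [if_neg (fun h => hc (Nat.dvd_add_self_right.mp h)), if_neg hc]
    · intro e he hed hcon
      have h1 := congrFun hcon v₀
      rw [hiter e v₀] at h1
      have hdφ : d ∣ φ v₀ := dvd_trans hd (hdvd _ (hφ v₀))
      have hnd : ¬ d ∣ φ v₀ + e := by
        intro hcc
        have hde : d ∣ e := (Nat.dvd_add_right hdφ).mp hcc
        have := Nat.le_of_dvd he hde
        omega
      rw [if_neg hnd] at h1
      have ha1 : a v₀ = 1 := if_pos hdφ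
      rw [ha1] at h1
      exact absurd h1 (by decide)
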